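/- For Hermitian matrices A and the family A_s = A + tan(s)·I with s ∈ (-π/2, π/2), the map s ↦ U_{A_s} = (A_s + iI)(A_s - iI)^{-1} is differentiable, and its logarithmic derivative at s = 0 satisfies (d/ds U_{A_s})|_{s=0} · U_{A_0}^{-1} = -2i(A_0^2 + I)^{-1}; in particular, i times this logarithmic derivative is positive definite. -/

import Mathlib

/-!
Put `B_s = A + (tan s - i)·I`. As `A` is Hermitian its spectrum is real, so `B_s` is invertible
and `U_{A_s} = (B_s + 2i)·B_s⁻¹ = 1 + 2i·B_s⁻¹`. Differentiating the inverse gives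
`U'(s) = -2i·sec² s·B_s⁻²`, hence `U'(0) = -2i (A - i)⁻²` and
`U'(0)·U(0)⁻¹ = -2i (A - i)⁻² (A - i)(A + i)⁻¹ = -2i ((A + i)(A - i))⁻¹ = -2i (A² + 1)⁻¹`.
Finally `A² + 1 ≥ 1`, so `i·U'(0)·U(0)⁻¹ = 2 (A² + 1)⁻¹` is positive definite.
-/

open Matrix
open scoped ComplexOrder

/-- The Cayley transform of the family `A_s = A + tan(s)·I`. -/
noncomputable def cayleyFamily (k : ℕ) (A : Matrix (Fin k) (Fin k) ℂ) (s : ℝ) :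
    Matrix (Fin k) (Fin k) ℂ :=
  (A + (Real.tan s : ℂ) • 1 + Complex.I • 1) * (A + (Real.tan s : ℂ) • 1 - Complex.I • 1)⁻¹

theorem HasDerivAt.ringInverse {𝕜 R : Type*} [NontriviallyNormedField 𝕜] [NormedRing R]
    [HasSummableGeomSeries R] [NormedAlgebra 𝕜 R] {f : 𝕜 → R} {f' : R} {x : 𝕜}
    (hf : HasDerivAt f f' x) (hx : IsUnit (f x)) :
    HasDerivAt (fun y => Ring.inverse (f y))
      (-(Ring.inverse (f x) * f' * Ring.inverse (f x))) x := by
  obtain ⟨u, hu⟩ := hx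
  have h := hasFDerivAt_ringInverse (𝕜 := 𝕜) u
  rw [hu] at h
  have := h.comp_hasDerivAt x hf
  rwa [← hu, Ring.inverse_unit]

theorem Matrix.IsHermitian.posDef_sq_add_one {𝕜 n : Type*} [RCLike 𝕜] [Fintype n] [DecidableEq n]
    {A : Matrix n n 𝕜} (hA : A.IsHermitian) : (A ^ 2 + 1).PosDef := by
  have hsq : (A ^ 2).PosSemidef := by
    simpa [sq, hA.eq] using posSemidef_conjTranspose_mul_self A
  exact PosDef.posSemidef_add hsq .one

theorem Matrix.add_smul_one_mul_inv {n R : Type*} [Fintype n] [DecidableEq n] [CommRing R]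
    {B : Matrix n n R} (hB : IsUnit B) (c : R) : (B + c • 1) * B⁻¹ = 1 + c • B⁻¹ := by
  rw [add_mul, mul_nonsing_inv _ ((isUnit_iff_isUnit_det B).mp hB), smul_mul_assoc, one_mul]

section L2

/- The L2 operator norm makes complex matrices a C⋆-algebra; it induces the product topology, so
the derivatives below are the entrywise ones of the statement. -/
open scoped Matrix.Norms.L2Operator

theorem Matrix.IsHermitian.isUnit_add_smul_one {n : Type*} [Fintype n] [DecidableEq n]
    {A : Matrix n n ℂ} (hA : A.IsHermitian) {z : ℂ} (hz : z.im ≠ 0) : IsUnit (A + z • 1) := by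
  by_contra h
  have hmem : -z ∈ spectrum ℂ A := by
    rwa [spectrum.mem_iff, Algebra.algebraMap_eq_smul_one, neg_smul, ← neg_add', IsUnit.neg_iff,
      add_comm]
  simpa [hz] using congrArg Complex.im (hA.isSelfAdjoint.mem_spectrum_eq_re hmem)

theorem HasDerivAt.matrix_apply {m n : Type*} [Fintype m] [Fintype n] [DecidableEq n]
    {f : ℝ → Matrix m n ℂ} {f' : Matrix m n ℂ} {s : ℝ} (hf : HasDerivAt f f' s) (i : m) (j : n) :
    HasDerivAt (fun u => f u i j) (f' i j) s :=
  (entryLinearMap ℝ ℂ i j).toContinuousLinearMap.hasFDerivAt.comp_hasDerivAt s hf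

variable {k : ℕ} {A : Matrix (Fin k) (Fin k) ℂ}

theorem cayleyFamily_eq (hA : A.IsHermitian) (s : ℝ) :
    cayleyFamily k A s = 1 + (2 * Complex.I) • (A + ((Real.tan s : ℂ) - Complex.I) • 1)⁻¹ := by
  have hden :
      A + (Real.tan s : ℂ) • 1 - Complex.I • 1 = A + ((Real.tan s : ℂ) - Complex.I) • 1 := by
    module
  rw [cayleyFamily, hden, ← add_smul_one_mul_inv (hA.isUnit_add_smul_one (by simp))]
  congr 1
  module

theorem hasDerivAt_cayleyFamily (hA : A.IsHermitian) {s : ℝ} (hs : Real.cos s ≠ 0) :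
    HasDerivAt (cayleyFamily k A)
      ((-(2 * Complex.I) / (Real.cos s ^ 2 : ℂ)) •
        (A + ((Real.tan s : ℂ) - Complex.I) • 1)⁻¹ ^ 2) s := by
  have hden : HasDerivAt (fun u : ℝ => A + ((Real.tan u : ℂ) - Complex.I) • 1)
      ((1 / Real.cos s ^ 2) • 1) s := by
    have hfun : (fun u : ℝ => A + ((Real.tan u : ℂ) - Complex.I) • 1) =
        fun u => (A - Complex.I • 1) + Real.tan u • (1 : Matrix (Fin k) (Fin k) ℂ) := by
      funext u
      rw [sub_smul, Complex.coe_smul]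
      abel
    rw [hfun]
    exact ((Real.hasDerivAt_tan hs).smul_const 1).const_add _
  have hinv := hden.ringInverse (hA.isUnit_add_smul_one (by simp))
  have hfun : cayleyFamily k A =
      fun u => 1 + (2 * Complex.I) • Ring.inverse (A + ((Real.tan u : ℂ) - Complex.I) • 1) := by
    funext u
    rw [cayleyFamily_eq hA, nonsing_inv_eq_ringInverse]
  rw [hfun]
  refine ((hinv.const_smul (2 * Complex.I)).const_add 1).congr_deriv ?_
  rw [← nonsing_inv_eq_ringInverse, mul_smul_comm, mul_one, smul_mul_assoc, ← Complex.coe_smul,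
    smul_neg, smul_smul, ← neg_smul]
  congr 1
  · push_cast
    ring
  · exact (sq _).symm

end L2

theorem Matrix.IsHermitian.inv_sub_I_sq_mul_cayley_inv {n : Type*} [Fintype n] [DecidableEq n]
    {A : Matrix n n ℂ} (hA : A.IsHermitian) :
    (A - Complex.I • 1)⁻¹ ^ 2 * ((A + Complex.I • 1) * (A - Complex.I • 1)⁻¹)⁻¹ =
      (A ^ 2 + 1)⁻¹ := by
  have hN : IsUnit (A - Complex.I • 1).det := by
    rw [← isUnit_iff_isUnit_det, sub_eq_add_neg, ← neg_smul]
    exact hA.isUnit_add_smul_one (by simp)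
  have hPN : (A + Complex.I • 1) * (A - Complex.I • 1) = A ^ 2 + 1 := by
    rw [add_mul, mul_sub, mul_sub, sq]
    simp only [mul_smul_comm, smul_mul_assoc, smul_smul, Complex.I_mul_I, mul_one, one_mul]
    module
  rw [mul_inv_rev, nonsing_inv_nonsing_inv _ hN, sq, mul_assoc, ← mul_assoc _ (A - _),
    nonsing_inv_mul _ hN, one_mul, ← mul_inv_rev, hPN]

theorem cayleyFamily_zero (k : ℕ) (A : Matrix (Fin k) (Fin k) ℂ) :
    cayleyFamily k A 0 = (A + Complex.I • 1) * (A - Complex.I • 1)⁻¹ := by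
  simp [cayleyFamily]

/-- For Hermitian `A` and `A_s = A + tan(s)·I`, the map `s ↦ U_{A_s}` is differentiable on
`(-π/2, π/2)`, its logarithmic derivative at `s = 0` equals `-2i(A² + I)⁻¹`, and `i` times
this logarithmic derivative is positive definite. -/
theorem cayley_family_logDeriv (k : ℕ) (A : Matrix (Fin k) (Fin k) ℂ) (hA : A.IsHermitian) :
    (∀ s ∈ Set.Ioo (-(Real.pi / 2) : ℝ) (Real.pi / 2), ∀ i j : Fin k,
        DifferentiableAt ℝ (fun u => cayleyFamily k A u i j) s) ∧
    ∃ D : Matrix (Fin k) (Fin k) ℂ,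
      (∀ i j, HasDerivAt (fun u => cayleyFamily k A u i j) (D i j) 0) ∧
      D * (cayleyFamily k A 0)⁻¹ = (-(2 : ℂ) * Complex.I) • (A ^ 2 + 1)⁻¹ ∧
      (Complex.I • (D * (cayleyFamily k A 0)⁻¹)).PosDef := by
  have hD :
      HasDerivAt (cayleyFamily k A) ((-(2 : ℂ) * Complex.I) • (A - Complex.I • 1)⁻¹ ^ 2) 0 := by
    simpa [← sub_eq_add_neg] using hasDerivAt_cayleyFamily hA (s := 0) (by simp)
  have hlog : ((-(2 : ℂ) * Complex.I) • (A - Complex.I • 1)⁻¹ ^ 2) * (cayleyFamily k A 0)⁻¹ =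
      (-(2 : ℂ) * Complex.I) • (A ^ 2 + 1)⁻¹ := by
    rw [smul_mul_assoc, cayleyFamily_zero, hA.inv_sub_I_sq_mul_cayley_inv]
  refine ⟨fun s hs i j => ?_, _, hD.matrix_apply, hlog, ?_⟩
  · exact ((hasDerivAt_cayleyFamily hA (Real.cos_pos_of_mem_Ioo hs).ne').matrix_apply i j)
      |>.differentiableAt
  · rw [hlog, smul_smul, show Complex.I * (-(2 : ℂ) * Complex.I) = 2 by ring_nf; simp]
    exact hA.posDef_sq_add_one.inv.smul two_pos
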